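/- arXiv:1503.04873 — 3 statements merged into one kernel-verified Lean document; each statement's English description precedes it below -/
import Mathlib

section
/- For every k ∈ ℕ, the map Σ_k → Σ_{k+1} given by x ↦ stem(b^c·a·x) is injective. -/
open scoped Classical

namespace BSpaper

/-- The single Baumslag–Solitar relator `a * b^c * (b^d * a)⁻¹` on two generators
(`true` plays the role of `a`, `false` the role of `b`). -/
def rels (c d : ℕ) : Set (FreeGroup Bool) :=
  {FreeGroup.of true * FreeGroup.of false ^ c * (FreeGroup.of false ^ d * FreeGroup.of true)⁻¹}

/-- The Baumslag–Solitar group `BS(c,d) = ⟨a, b ∣ a b^c = b^d a⟩`. -/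
abbrev Grp (c d : ℕ) := PresentedGroup (rels c d)

variable (c d : ℕ)

/-- The generator `a`. -/
def a : Grp c d := PresentedGroup.of true

/-- The generator `b`. -/
def b : Grp c d := PresentedGroup.of false

/-- The submonoid `P` of `BS(c,d)` generated by `a` and `b`. -/
def P : Submonoid (Grp c d) := Submonoid.closure {a c d, b c d}

/-- The word `b^{s₀} a b^{s₁} a ⋯ b^{s_{k-1}} a` associated to a list of digits `s_i < d`. -/
def wordStem : List (Fin d) → Grp c d
  | [] => 1
  | i :: l => b c d ^ (i : ℕ) * a c d * wordStem l

/-- `Σ_k`: the set of stems of height `k`. -/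
def SigmaSet (k : ℕ) : Set (Grp c d) :=
  {g | ∃ l : List (Fin d), l.length = k ∧ wordStem c d l = g}

/-- The data `(l, t)` of a normal-form decomposition `x = (b^{s₀} a ⋯ b^{s_{k-1}} a) * b^t`,
chosen by choice when it exists (it exists, uniquely, for every `x ∈ P`). -/
noncomputable def nf (x : Grp c d) : List (Fin d) × ℕ :=
  if h : ∃ p : List (Fin d) × ℕ, x = wordStem c d p.1 * b c d ^ p.2 then h.choose else ([], 0)

/-- The stem of `x`, i.e. the stem part of the normal form of `x`. -/
noncomputable def stem (x : Grp c d) : Grp c d := wordStem c d (nf c d x).1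

/-- The left-invariant partial order on `BS(c,d)`: `g ≤ h` iff `g⁻¹ * h ∈ P`. -/
def bsLe (g h : Grp c d) : Prop := g⁻¹ * h ∈ P c d

lemma a_mem_P : a c d ∈ P c d := Submonoid.subset_closure (Set.mem_insert _ _)

lemma b_mem_P : b c d ∈ P c d :=
  Submonoid.subset_closure (Set.mem_insert_of_mem _ rfl)

lemma wordStem_mem_P (l : List (Fin d)) : wordStem c d l ∈ P c d := by
  induction l with
  | nil => exact one_mem _
  | cons i l ih =>
      exact mul_mem (mul_mem (pow_mem (b_mem_P c d) _) (a_mem_P c d)) ih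


-- basic relation
lemma bs_rel : a c d * b c d ^ c = b c d ^ d * a c d := by
  have h : (PresentedGroup.mk (rels c d))
      (FreeGroup.of true * FreeGroup.of false ^ c * (FreeGroup.of false ^ d * FreeGroup.of true)⁻¹) = 1 :=
    (QuotientGroup.eq_one_iff _).2 (Subgroup.subset_normalClosure (Set.mem_singleton _))
  have h2 : a c d * b c d ^ c * (b c d ^ d * a c d)⁻¹ = 1 := by
    simpa [a, b, PresentedGroup.of, map_mul, map_pow, map_inv] using h
  exact mul_inv_eq_one.1 h2

open Multiplicative HNNExtension

/-- the cyclic subgroup `⟨ofAdd c⟩` of `Multiplicative ℤ`. -/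
def AA (c : ℕ) : Subgroup (Multiplicative ℤ) := Subgroup.zpowers (ofAdd (c : ℤ))

def homc (c : ℕ) : Multiplicative ℤ →* AA c where
  toFun n := ⟨ofAdd (n.toAdd * c), ⟨n.toAdd, by
    simp only [← smul_eq_mul (α := ℤ), ofAdd_zsmul]⟩⟩
  map_one' := by ext; simp
  map_mul' x y := by ext; simp [add_mul, ofAdd_add]

lemma homc_bijective (c : ℕ) (hc : c ≠ 0) : Function.Bijective (homc c) := by
  constructor
  · intro x y h
    have h2 := Subtype.ext_iff.1 h
    simp only [homc, MonoidHom.coe_mk, OneHom.coe_mk] at h2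
    have h3 : (x.toAdd) * (c : ℤ) = (y.toAdd) * (c : ℤ) := by
      have := congrArg Multiplicative.toAdd h2
      simpa using this
    have h4 : (x.toAdd) = (y.toAdd) := mul_right_cancel₀ (by exact_mod_cast hc) h3
    exact Multiplicative.toAdd.injective h4
  · rintro ⟨x, k, rfl⟩
    refine ⟨ofAdd k, ?_⟩
    ext
    show ofAdd ((Multiplicative.toAdd (ofAdd k)) * (c : ℤ)) = ofAdd (c : ℤ) ^ k
    simp only [toAdd_ofAdd, ← smul_eq_mul (α := ℤ), ofAdd_zsmul]

noncomputable def eqv (c : ℕ) (hc : c ≠ 0) : Multiplicative ℤ ≃* AA c :=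
  MulEquiv.ofBijective (homc c) (homc_bijective c hc)

noncomputable def φ₀ (hc : c ≠ 0) (hd : d ≠ 0) : AA c ≃* AA d :=
  (eqv c hc).symm.trans (eqv d hd)

lemma eqv_ofAdd_one (c : ℕ) (hc : c ≠ 0) :
    eqv c hc (ofAdd 1) = ⟨ofAdd (c : ℤ), Subgroup.mem_zpowers _⟩ := by
  ext
  show ofAdd ((Multiplicative.toAdd (ofAdd (1:ℤ))) * (c : ℤ)) = ofAdd (c : ℤ)
  simp

lemma φ₀_apply (hc : c ≠ 0) (hd : d ≠ 0) :
    φ₀ c d hc hd ⟨ofAdd (c : ℤ), Subgroup.mem_zpowers _⟩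
      = ⟨ofAdd (d : ℤ), Subgroup.mem_zpowers _⟩ := by
  have h1 : (eqv c hc).symm ⟨ofAdd (c : ℤ), Subgroup.mem_zpowers _⟩ = ofAdd 1 := by
    rw [MulEquiv.symm_apply_eq, eqv_ofAdd_one]
  simp [φ₀, h1, eqv_ofAdd_one]

variable {c d} in
noncomputable def Ψ (hc : c ≠ 0) (hd : d ≠ 0) :
    Grp c d →* HNNExtension (Multiplicative ℤ) (AA c) (AA d) (φ₀ c d hc hd) :=
  PresentedGroup.toGroup (f := fun x => cond x HNNExtension.t (HNNExtension.of (ofAdd (1:ℤ))))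
    (by
      rintro r ⟨rfl⟩
      simp only [map_mul, map_pow, map_inv, FreeGroup.lift_apply_of, cond_true, cond_false]
      rw [mul_inv_eq_one]
      have hpow : (HNNExtension.of (G := Multiplicative ℤ) (A := AA c) (B := AA d)
          (φ := φ₀ c d hc hd) (ofAdd (1:ℤ))) ^ c = HNNExtension.of (ofAdd (c : ℤ)) := by
        rw [← map_pow, ← ofAdd_nsmul]; norm_num
      have hpow' : (HNNExtension.of (G := Multiplicative ℤ) (A := AA c) (B := AA d)
          (φ := φ₀ c d hc hd) (ofAdd (1:ℤ))) ^ d = HNNExtension.of (ofAdd (d : ℤ)) := by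
        rw [← map_pow, ← ofAdd_nsmul]; norm_num
      rw [hpow, hpow']
      have := HNNExtension.t_mul_of (φ := φ₀ c d hc hd)
        ⟨ofAdd (c : ℤ), Subgroup.mem_zpowers _⟩
      rwa [φ₀_apply] at this)

variable (hc : c ≠ 0) (hd : d ≠ 0)

lemma Ψ_a : Ψ hc hd (a c d) = HNNExtension.t := by
  simp [Ψ, a, PresentedGroup.toGroup.of]

lemma Ψ_b_pow (n : ℕ) : Ψ hc hd (b c d ^ n) = HNNExtension.of (ofAdd (n : ℤ)) := by
  rw [map_pow]
  have : Ψ hc hd (b c d) = HNNExtension.of (ofAdd (1:ℤ)) := by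
    simp [Ψ, b, PresentedGroup.toGroup.of]
  rw [this, ← map_pow, ← ofAdd_nsmul]
  norm_num

section NF

variable {c d}

/-- head of the reduced word for `wordStem l * b^m`. -/
def rwHead : List (Fin d) → ℕ → Multiplicative ℤ
  | [], m => ofAdd (m : ℤ)
  | s :: _, _ => ofAdd ((s : ℕ) : ℤ)

/-- tail of the reduced word for `wordStem l * b^m`. -/
def rwTail : List (Fin d) → ℕ → List (ℤˣ × Multiplicative ℤ)
  | [], _ => []
  | _ :: l, m => (1, rwHead l m) :: rwTail l m

lemma rwTail_fst : ∀ (l : List (Fin d)) (m : ℕ) (p : ℤˣ × Multiplicative ℤ),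
    p ∈ rwTail l m → p.1 = 1
  | [], _, _, h => by simp [rwTail] at h
  | s :: l, m, p, h => by
      rcases List.mem_cons.1 h with h | h
      · rw [h]
      · exact rwTail_fst l m p h

lemma rwTail_length : ∀ (l : List (Fin d)) (m : ℕ), (rwTail l m).length = l.length
  | [], _ => rfl
  | s :: l, m => by simp [rwTail, rwTail_length l m]

lemma rwTail_chain (c : ℕ) : ∀ (l : List (Fin d)) (m : ℕ),
    List.Chain' (fun p q : ℤˣ × Multiplicative ℤ =>
      p.2 ∈ HNNExtension.toSubgroup (AA c) (AA d) p.1 → p.1 = q.1) (rwTail l m)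
  | [], _ => List.isChain_nil
  | s :: l, m => by
      refine List.isChain_cons.2 ⟨?_, rwTail_chain c l m⟩
      intro q hq _
      rw [rwTail_fst l m q (List.mem_of_mem_head? hq)]

/-- the reduced word of `wordStem l * b^m`. -/
def rw (c : ℕ) (l : List (Fin d)) (m : ℕ) :
    HNNExtension.NormalWord.ReducedWord (Multiplicative ℤ) (AA c) (AA d) :=
  ⟨rwHead l m, rwTail l m, rwTail_chain c l m⟩


open HNNExtension.NormalWord in
lemma rw_prod (hc : c ≠ 0) (hd : d ≠ 0) : ∀ (l : List (Fin d)) (m : ℕ),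
    (rw c l m).prod (φ₀ c d hc hd) = Ψ hc hd (wordStem c d l * b c d ^ m)
  | [], m => by
      simp [rw, rwHead, rwTail, ReducedWord.prod, wordStem, Ψ_b_pow]
  | s :: l, m => by
      have ih := rw_prod hc hd l m
      have hre : wordStem c d (s :: l) * b c d ^ m
          = b c d ^ (s : ℕ) * (a c d * (wordStem c d l * b c d ^ m)) := by
        simp [wordStem, mul_assoc]
      rw [hre, map_mul, map_mul, Ψ_a, Ψ_b_pow, ← ih]
      simp only [rw, ReducedWord.prod, rwTail, List.map_cons, List.prod_cons]
      have h1 : rwHead (s :: l) m = ofAdd ((s : ℕ) : ℤ) := rfl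
      rw [h1]
      simp [mul_assoc]

open HNNExtension.NormalWord in
lemma nf_unique (hc : c ≠ 0) (hd : d ≠ 0) (l : List (Fin d)) :
    ∀ (l' : List (Fin d)) (m m' : ℕ),
    wordStem c d l * b c d ^ m = wordStem c d l' * b c d ^ m' → l = l' ∧ m = m' := by
  induction l with
  | nil =>
      intro l' m m' h
      have hprod : (rw c ([] : List (Fin d)) m).prod (φ₀ c d hc hd)
          = (rw c l' m').prod (φ₀ c d hc hd) := by
        rw [rw_prod hc hd, rw_prod hc hd, h]
      obtain ⟨hfst, -⟩ := ReducedWord.map_fst_eq_and_of_prod_eq _ hprod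
      cases l' with
      | cons s' l' => simp [rw, rwTail] at hfst
      | nil =>
          refine ⟨rfl, ?_⟩
          simp only [wordStem, one_mul] at h
          have h2 := congrArg (Ψ hc hd) h
          rw [Ψ_b_pow, Ψ_b_pow] at h2
          have h3 := HNNExtension.of_injective (φ₀ c d hc hd) h2
          exact_mod_cast Multiplicative.ofAdd.injective h3
  | cons s l ihl =>
      intro l' m m' h
      have hprod : (rw c (s :: l) m).prod (φ₀ c d hc hd)
          = (rw c l' m').prod (φ₀ c d hc hd) := by
        rw [rw_prod hc hd, rw_prod hc hd, h]
      obtain ⟨hfst, hhead⟩ := ReducedWord.map_fst_eq_and_of_prod_eq _ hprod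
      cases l' with
      | nil => simp [rw, rwTail] at hfst
      | cons s' l' =>
          have hs : s = s' := by
            have hu := hhead 1 (by simp [rw, rwTail])
            rw [HNNExtension.toSubgroup_neg_one] at hu
            simp only [rw, rwHead] at hu
            obtain ⟨k, hk⟩ := hu
            have hk2 : (d : ℤ) * k = -((s : ℕ) : ℤ) + ((s' : ℕ) : ℤ) := by
              have h5 := congrArg Multiplicative.toAdd hk
              simpa [← ofAdd_zsmul, smul_eq_mul] using h5
            have h1 : ((s : ℕ) : ℤ) < d := by exact_mod_cast s.isLt
            have h2 : ((s' : ℕ) : ℤ) < d := by exact_mod_cast s'.isLt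
            have h3 : (0 : ℤ) ≤ ((s : ℕ) : ℤ) := Int.natCast_nonneg _
            have h4 : (0 : ℤ) ≤ ((s' : ℕ) : ℤ) := Int.natCast_nonneg _
            have hk0 : k = 0 := by
              rcases lt_trichotomy k 0 with hlt | hk0 | hgt
              · nlinarith [Int.add_one_le_iff.2 hlt]
              · exact hk0
              · nlinarith [Int.add_one_le_iff.2 hgt]
            have h6 : ((s : ℕ) : ℤ) = ((s' : ℕ) : ℤ) := by rw [hk0, mul_zero] at hk2; omega
            exact Fin.ext (by exact_mod_cast h6)
          subst hs
          have hcancel : wordStem c d l * b c d ^ m = wordStem c d l' * b c d ^ m' := by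
            have h2 : b c d ^ (s : ℕ) * a c d * (wordStem c d l * b c d ^ m)
                = b c d ^ (s : ℕ) * a c d * (wordStem c d l' * b c d ^ m') := by
              simpa [wordStem, mul_assoc] using h
            exact mul_left_cancel h2
          obtain ⟨h1, h2⟩ := ihl l' m m' hcancel
          exact ⟨by rw [h1], h2⟩


lemma rel2 (q : ℕ) : b c d ^ (d * q) * a c d = a c d * b c d ^ (c * q) := by
  induction q with
  | zero => simp
  | succ q ih =>
      have h1 : b c d ^ (d * (q + 1)) = b c d ^ (d * q) * b c d ^ d := by
        rw [← pow_add]; ring_nf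
      have h2 : a c d * b c d ^ (c * (q + 1)) = a c d * b c d ^ (c * q) * b c d ^ c := by
        rw [mul_assoc, ← pow_add]; ring_nf
      rw [h1, h2, mul_assoc, ← bs_rel, ← mul_assoc, ih]


lemma exists_decomp (hdd : d ≠ 0) (l : List (Fin d)) : ∀ m : ℕ,
    ∃ (L : List (Fin d)) (M : ℕ), L.length = l.length ∧
      b c d ^ m * wordStem c d l = wordStem c d L * b c d ^ M := by
  induction l with
  | nil => intro m; exact ⟨[], m, rfl, by simp [wordStem]⟩
  | cons s l ih =>
      intro m
      set q := (m + (s : ℕ)) / d with hq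
      set r := (m + (s : ℕ)) % d with hr
      obtain ⟨L2, M2, hlen, heq⟩ := ih (c * q)
      refine ⟨⟨r, Nat.mod_lt _ (Nat.pos_of_ne_zero hdd)⟩ :: L2, M2, by simp [hlen], ?_⟩
      have hdiv : r + d * q = m + (s : ℕ) := by
        rw [hq, hr, add_comm]; exact Nat.div_add_mod _ _
      calc b c d ^ m * wordStem c d (s :: l)
          = b c d ^ (m + (s : ℕ)) * (a c d * wordStem c d l) := by
            simp [wordStem, pow_add, mul_assoc]
        _ = b c d ^ r * (b c d ^ (d * q) * a c d) * wordStem c d l := by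
            rw [← hdiv, pow_add]; simp [mul_assoc]
        _ = b c d ^ r * a c d * (b c d ^ (c * q) * wordStem c d l) := by
            rw [rel2]; simp [mul_assoc]
        _ = b c d ^ r * a c d * (wordStem c d L2 * b c d ^ M2) := by rw [heq]
        _ = wordStem c d (⟨r, Nat.mod_lt _ (Nat.pos_of_ne_zero hdd)⟩ :: L2) * b c d ^ M2 := by
            simp [wordStem, mul_assoc]

end NF

section Main

variable {c d}

lemma stem_eq (hc : c ≠ 0) (hd : d ≠ 0) (x : Grp c d) (L : List (Fin d)) (M : ℕ)
    (hx : x = wordStem c d L * b c d ^ M) : stem c d x = wordStem c d L := by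
  have hex : ∃ p : List (Fin d) × ℕ, x = wordStem c d p.1 * b c d ^ p.2 := ⟨(L, M), hx⟩
  have hnf : nf c d x = hex.choose := by rw [nf, dif_pos hex]
  have hspec := hex.choose_spec
  obtain ⟨h1, -⟩ := nf_unique hc hd hex.choose.1 L hex.choose.2 M (hspec.symm.trans hx)
  rw [stem, hnf, h1]

lemma target_decomp (hd0 : 0 < d) (l : List (Fin d)) :
    ∃ (L : List (Fin d)) (M : ℕ), L.length = l.length + 1 ∧
      b c d ^ c * a c d * wordStem c d l = wordStem c d L * b c d ^ M := by
  obtain ⟨L, M, hlen, heq⟩ := exists_decomp hd0.ne' (⟨0, hd0⟩ :: l) c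
  refine ⟨L, M, by simpa using hlen, ?_⟩
  rw [← heq]
  simp [wordStem, mul_assoc]

end Main

/-- For every k ∈ ℕ, the map x ↦ stem(b^c·a·x) maps Σ_k into Σ_(k+1) and is injective on Σ_k. -/
theorem statement2 (c d : ℕ) (hc : 0 < c) (hd : 0 < d) (k : ℕ) :
    Set.MapsTo (fun x => stem c d (b c d ^ c * a c d * x))
        (SigmaSet c d k) (SigmaSet c d (k + 1)) ∧
      Set.InjOn (fun x => stem c d (b c d ^ c * a c d * x)) (SigmaSet c d k) := by
  have hc' : c ≠ 0 := hc.ne'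
  have hd' : d ≠ 0 := hd.ne'
  constructor
  · rintro x ⟨l, hl, rfl⟩
    obtain ⟨L, M, hlen, heq⟩ := target_decomp hd l
    exact ⟨L, by rw [hlen, hl], (stem_eq hc' hd' _ L M heq).symm⟩
  · rintro x ⟨l, hl, rfl⟩ y ⟨l', hl', rfl⟩ hxy
    obtain ⟨L, M, hlen, heq⟩ := target_decomp hd l
    obtain ⟨L', M', hlen', heq'⟩ := target_decomp hd l'
    have h1 : stem c d (b c d ^ c * a c d * wordStem c d l) = wordStem c d L :=
      stem_eq hc' hd' _ L M heq
    have h1' : stem c d (b c d ^ c * a c d * wordStem c d l') = wordStem c d L' :=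
      stem_eq hc' hd' _ L' M' heq'
    have hxy' : wordStem c d L = wordStem c d L' := by
      rw [← h1, ← h1']; exact hxy
    have h2 : b c d ^ c * a c d * (wordStem c d l * b c d ^ M')
        = b c d ^ c * a c d * (wordStem c d l' * b c d ^ M) := by
      calc b c d ^ c * a c d * (wordStem c d l * b c d ^ M')
          = (b c d ^ c * a c d * wordStem c d l) * b c d ^ M' := (mul_assoc _ _ _).symm
        _ = (wordStem c d L * b c d ^ M) * b c d ^ M' := by rw [heq]
        _ = wordStem c d L' * b c d ^ (M + M') := by rw [hxy', mul_assoc, ← pow_add]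
        _ = (wordStem c d L' * b c d ^ M') * b c d ^ M := by
            rw [add_comm, pow_add, mul_assoc]
        _ = (b c d ^ c * a c d * wordStem c d l') * b c d ^ M := by rw [heq']
        _ = b c d ^ c * a c d * (wordStem c d l' * b c d ^ M) := mul_assoc _ _ _
    have key : wordStem c d l * b c d ^ M' = wordStem c d l' * b c d ^ M :=
      mul_left_cancel h2
    obtain ⟨hl2, -⟩ := nf_unique hc' hd' l l' M' M key
    show wordStem c d l = wordStem c d l'
    rw [hl2]


end BSpaper
end

section
/- The operators T_a and T_b on ℓ²(P) are isometries and satisfy: (i) T_a T_b^c = T_b^d T_a; (ii) (T_b)* T_a = T_b^{d-1} T_a ((T_b)*)^c; and (iii) (T_a)* T_b^j T_a = 0 for every integer j with 1 ≤ j < d. -/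
/-!
Since `T x` maps `e y` to `e (x * y)`, the map `x ↦ T x` is multiplicative, and `(T u)* e z` is
`e y` when `z = u * y` and `0` when `z ∉ u P`. So (i) is the defining relation, while (ii) and (iii)
amount to `b P ∩ a P ⊆ a b^c P` and `a P ∩ b^j a P = ∅` for `0 < j < d`.

Both inclusions come from a height on `BS(c,d)`. The group acts on Britton normal forms
`b^m a^{±1} b^{r₁} ⋯ a^{±1} b^{rₖ}`: `b` by `m ↦ m + 1`, and `a`, on the normal forms of elements
of `P` (which contain no `a⁻¹`), by `m ↦ d ⌊m / c⌋`. The height of `g` is the exponent `m` of the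
normal form of `g`; it is nonnegative on `P`, and `p ∈ b^n P` as soon as `n ≤ height p`.
-/

open scoped Classical

namespace BSpaper

variable (c d : ℕ)

/-- `a` as an element of the submonoid `P`. -/
def aP : P c d := ⟨a c d, a_mem_P c d⟩

/-- `b` as an element of the submonoid `P`. -/
def bP : P c d := ⟨b c d, b_mem_P c d⟩

/-- `ℓ²(P)`, the Hilbert space of square-summable families indexed by `P`. -/
noncomputable abbrev l2P := lp (fun _ : P c d => ℂ) 2

end BSpaper

open ContinuousLinearMap (adjoint adjoint_inner_right ext_ring)
open scoped lp

theorem ContinuousLinearMap.adjoint_pow {𝕜 E : Type*} [RCLike 𝕜] [NormedAddCommGroup E]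
    [InnerProductSpace 𝕜 E] [CompleteSpace E] (A : E →L[𝕜] E) (n : ℕ) :
    adjoint (A ^ n) = adjoint A ^ n := by
  simpa only [star_eq_adjoint] using star_pow A n

section BasisMaps

variable {𝕜 ι κ : Type*} [RCLike 𝕜] [DecidableEq ι]

theorem ext_lp_single {S₁ S₂ : ℓ²(ι, 𝕜) →L[𝕜] ℓ²(κ, 𝕜)}
    (h : ∀ i, S₁ (lp.single 2 i 1) = S₂ (lp.single 2 i 1)) : S₁ = S₂ :=
  lp.ext_continuousLinearMap ENNReal.ofNat_ne_top fun i => ext_ring (h i)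

variable [DecidableEq κ] {f : ι → κ} {S : ℓ²(ι, 𝕜) →L[𝕜] ℓ²(κ, 𝕜)}

theorem adjoint_apply_apply_of_apply_single
    (hS : ∀ i, S (lp.single 2 i 1) = lp.single 2 (f i) 1) (v : ℓ²(κ, 𝕜)) (i : ι) :
    adjoint S v i = v (f i) := by
  have h := adjoint_inner_right S (lp.single 2 i 1) v
  rwa [hS, lp.inner_single_left, lp.inner_single_left, RCLike.inner_apply, RCLike.inner_apply,
    map_one, mul_one, mul_one] at h

theorem adjoint_apply_single_of_injective (hS : ∀ i, S (lp.single 2 i 1) = lp.single 2 (f i) 1)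
    (hf : f.Injective) (i : ι) : adjoint S (lp.single 2 (f i) 1) = lp.single 2 i 1 := by
  ext j
  simp [adjoint_apply_apply_of_apply_single hS, lp.single_apply, Pi.single_apply, hf.eq_iff]

theorem adjoint_apply_single_of_notMem_range
    (hS : ∀ i, S (lp.single 2 i 1) = lp.single 2 (f i) 1) {k : κ} (hk : k ∉ Set.range f) :
    adjoint S (lp.single 2 k 1) = 0 := by
  ext j
  rw [adjoint_apply_apply_of_apply_single hS, lp.single_apply_ne _ _ _ fun h => hk ⟨j, h⟩]
  rfl

end BasisMaps

section LeftRegular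

variable {𝕜 M : Type*} [RCLike 𝕜] [Monoid M] [DecidableEq M]

def IsLeftRegularRep (T : M → ℓ²(M, 𝕜) →L[𝕜] ℓ²(M, 𝕜)) : Prop :=
  ∀ x y, T x (lp.single 2 y 1) = lp.single 2 (x * y) 1

namespace IsLeftRegularRep

variable {T : M → ℓ²(M, 𝕜) →L[𝕜] ℓ²(M, 𝕜)} (hT : IsLeftRegularRep T)
include hT

theorem map_one : T 1 = 1 :=
  ext_lp_single fun y => by rw [hT, one_mul, one_apply_eq_self]

theorem map_mul (x y : M) : T (x * y) = T x * T y :=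
  ext_lp_single fun z => by rw [mul_apply_eq_comp, hT, hT, hT, mul_assoc]

theorem map_pow (x : M) (n : ℕ) : T (x ^ n) = T x ^ n := by
  induction n with
  | zero => rw [pow_zero, pow_zero, hT.map_one]
  | succ n ih => rw [pow_succ, pow_succ, hT.map_mul, ih]

theorem adjoint_mul_self [IsLeftCancelMul M] (x : M) : adjoint (T x) * T x = 1 :=
  ext_lp_single fun y => by
    rw [mul_apply_eq_comp, hT, adjoint_apply_single_of_injective (hT x) (mul_right_injective x),
      one_apply_eq_self]

theorem adjoint_mul_eq_zero {u x : M} (h : ∀ y z, u * z ≠ x * y) : adjoint (T u) * T x = 0 :=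
  ext_lp_single fun y => by
    rw [mul_apply_eq_comp, hT,
      adjoint_apply_single_of_notMem_range (hT u) fun ⟨z, hz⟩ => h y z hz, zero_apply]

theorem adjoint_mul_eq_mul_adjoint [IsLeftCancelMul M] {u x w v : M} (hrel : u * w = x * v)
    (h : ∀ y z, u * z = x * y → ∃ q, y = v * q) :
    adjoint (T u) * T x = T w * adjoint (T v) := by
  refine ext_lp_single fun y => ?_
  rw [mul_apply_eq_comp, mul_apply_eq_comp, hT]
  by_cases hy : ∃ q, y = v * q
  · obtain ⟨q, rfl⟩ := hy
    rw [← mul_assoc, ← hrel, mul_assoc,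
      adjoint_apply_single_of_injective (hT u) (mul_right_injective u),
      adjoint_apply_single_of_injective (hT v) (mul_right_injective v), hT]
  · rw [adjoint_apply_single_of_notMem_range (hT v) fun ⟨q, hq⟩ => hy ⟨q, hq.symm⟩, map_zero,
      adjoint_apply_single_of_notMem_range (hT u) fun ⟨z, hz⟩ => hy (h y z hz)]

end IsLeftRegularRep

end LeftRegular

namespace BSpaper

variable (c d : ℕ)

lemma semiconjBy_a_b_pow : SemiconjBy (a c d) (b c d ^ c) (b c d ^ d) := by
  have h : ((QuotientGroup.mk (FreeGroup.of true * FreeGroup.of false ^ c *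
      (FreeGroup.of false ^ d * FreeGroup.of true)⁻¹)) : Grp c d) = 1 :=
    (QuotientGroup.eq_one_iff _).mpr (Subgroup.subset_normalClosure rfl)
  simp only [QuotientGroup.mk_mul, QuotientGroup.mk_inv, QuotientGroup.mk_pow,
    mul_inv_eq_one] at h
  exact h

lemma aP_mul_bP_pow : aP c d * bP c d ^ c = bP c d ^ d * aP c d :=
  Subtype.ext (semiconjBy_a_b_pow c d)

lemma bP_mul_bP_pow_pred_mul_aP [NeZero d] :
    bP c d * (bP c d ^ (d - 1) * aP c d) = aP c d * bP c d ^ c := by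
  rw [← mul_assoc, ← pow_succ', Nat.sub_add_cancel (Nat.pos_of_neZero d), aP_mul_bP_pow]

/- `(m, [(ε₁, r₁), …, (εₖ, rₖ)])` encodes `b^m a^{±1} b^{r₁} ⋯ a^{±1} b^{rₖ}`, with `true` for `a`
and `false` for `a⁻¹`; the exponent of `b` after `a` is below `c`, after `a⁻¹` below `d`, and
`Reduced` also excludes pinches `a^{±1} b^0 a^{∓1}`. `step true` and `step false` are left
multiplication by `a` and `a⁻¹`. -/
abbrev Letter := Bool × ℕ

def modulus (t : Bool) : ℕ := cond t c d

def Reduced (l : List Letter) : Prop :=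
  (∀ e ∈ l, e.2 < modulus c d e.1) ∧ l.IsChain fun e e' => e.1 = e'.1 ∨ e.2 ≠ 0

def step (t : Bool) : ℤ × List Letter → ℤ × List Letter
  | (m, (t', s) :: l) =>
      if t' ≠ t ∧ m % (modulus c d t : ℤ) = 0 then
        ((modulus c d !t : ℤ) * (m / modulus c d t) + s, l)
      else ((modulus c d !t : ℤ) * (m / modulus c d t),
        (t, (m % modulus c d t).toNat) :: (t', s) :: l)
  | (m, []) => ((modulus c d !t : ℤ) * (m / modulus c d t), [(t, (m % modulus c d t).toNat)])

variable {c d}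

lemma step_cons_of_ne {t t' : Bool} (ht : t' ≠ t) {m : ℤ} (hm : m % (modulus c d t : ℤ) = 0)
    (s : ℕ) (l : List Letter) :
    step c d t (m, (t', s) :: l) = ((modulus c d !t : ℤ) * (m / modulus c d t) + s, l) :=
  if_pos ⟨ht, hm⟩

lemma step_of_not_cancel {t : Bool} {m : ℤ} {l : List Letter}
    (h : ∀ s l', l = (!t, s) :: l' → m % (modulus c d t : ℤ) ≠ 0) :
    step c d t (m, l) =
      ((modulus c d !t : ℤ) * (m / modulus c d t), (t, (m % modulus c d t).toNat) :: l) := by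
  match l with
  | [] => rfl
  | (t', s) :: l' =>
      refine if_neg fun ⟨ht, hm⟩ => h s l' ?_ hm
      rw [Bool.eq_not_of_ne ht]

lemma step_true_of_forall_fst {x : ℤ × List Letter} (hx : ∀ e ∈ x.2, e.1 = true) :
    step c d true x = ((d : ℤ) * (x.1 / c), (true, (x.1 % c).toNat) :: x.2) :=
  step_of_not_cancel fun s l h _ => absurd (hx _ (h ▸ List.mem_cons_self)) (by simp)

variable (c d) in
abbrev NormalForm := {x : ℤ × List Letter // Reduced c d x.2}

variable (c d) in
def shiftPerm : Equiv.Perm (NormalForm c d) where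
  toFun x := ⟨(x.1.1 + 1, x.1.2), x.2⟩
  invFun x := ⟨(x.1.1 - 1, x.1.2), x.2⟩
  left_inv x := by simp
  right_inv x := by simp

lemma shiftPerm_apply (x : NormalForm c d) : (shiftPerm c d x).1 = (x.1.1 + 1, x.1.2) := rfl

lemma shiftPerm_pow_apply (n : ℕ) (x : NormalForm c d) :
    ((shiftPerm c d ^ n) x).1 = (x.1.1 + n, x.1.2) := by
  induction n with
  | zero => simp
  | succ n ih =>
      rw [pow_succ', Equiv.Perm.mul_apply, shiftPerm_apply, ih, Nat.cast_succ, add_assoc]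

variable [NeZero c] [NeZero d]

lemma modulus_pos (t : Bool) : 0 < (modulus c d t : ℤ) := by
  cases t <;> simp [modulus, Nat.pos_of_neZero]

lemma toNat_emod_modulus_lt (t : Bool) (m : ℤ) :
    (m % modulus c d t).toNat < modulus c d t := by
  have hpos := modulus_pos (c := c) (d := d) t
  have := Int.emod_nonneg m hpos.ne'
  have := Int.emod_lt_of_pos m hpos
  omega

lemma mul_ediv_modulus_add_toNat_emod (t : Bool) (m : ℤ) :
    (modulus c d t : ℤ) * (m / modulus c d t) + (m % modulus c d t).toNat = m := by
  rw [Int.toNat_of_nonneg (Int.emod_nonneg m (modulus_pos t).ne'), Int.mul_ediv_add_emod]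

lemma reduced_step (t : Bool) {x : ℤ × List Letter} (hx : Reduced c d x.2) :
    Reduced c d (step c d t x).2 := by
  obtain ⟨m, l⟩ := x
  have hr := toNat_emod_modulus_lt (c := c) (d := d) t m
  match l, hx with
  | [], _ => exact ⟨by simpa [step] using hr, List.isChain_singleton _⟩
  | (t', s) :: l, ⟨hlt, hchain⟩ =>
      simp only [step]
      split_ifs with hcancel
      · exact ⟨fun e he => hlt e (List.mem_cons_of_mem _ he), hchain.tail⟩
      · refine ⟨?_, List.isChain_cons_cons.mpr ⟨?_, hchain⟩⟩
        · intro e he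
          rcases List.mem_cons.mp he with rfl | he
          exacts [hr, hlt e he]
        · by_cases htt : t = t'
          · exact Or.inl htt
          · have hm : m % (modulus c d t : ℤ) ≠ 0 := fun hm => hcancel ⟨Ne.symm htt, hm⟩
            have := Int.emod_nonneg m (modulus_pos (c := c) (d := d) t).ne'
            exact Or.inr (by omega)

lemma step_not_step (t : Bool) {m : ℤ} {l : List Letter} (hl : Reduced c d l) :
    step c d (!t) (step c d t (m, l)) = (m, l) := by
  have hq := modulus_pos (c := c) (d := d) (!t)
  by_cases hcancel : ∃ s l', l = (!t, s) :: l' ∧ m % (modulus c d t : ℤ) = 0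
  · obtain ⟨s, l', rfl, hm⟩ := hcancel
    have hs : s < modulus c d (!t) := hl.1 _ List.mem_cons_self
    obtain ⟨hdiv, hmod⟩ := (Int.ediv_emod_unique hq).mpr
      ⟨add_comm _ _, Int.natCast_nonneg s, by exact_mod_cast hs⟩
    have hs0 : ∀ s' l'', l' = (!!t, s') :: l'' →
        ((modulus c d !t : ℤ) * (m / modulus c d t) + s) % (modulus c d !t : ℤ) ≠ 0 := by
      rintro s' l'' rfl
      have hs0 := ((List.isChain_cons_cons.mp hl.2).1).resolve_left (by simp)
      rw [hmod]
      exact_mod_cast hs0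
    rw [step_cons_of_ne (Bool.not_ne_self t) hm, step_of_not_cancel hs0, hdiv, hmod,
      Bool.not_not, Int.toNat_natCast]
    have := Int.mul_ediv_add_emod m (modulus c d t)
    rw [hm, add_zero] at this
    rw [this]
  · rw [step_of_not_cancel fun s l' h hm => hcancel ⟨s, l', h, hm⟩,
      step_cons_of_ne (Bool.not_ne_self t).symm (Int.mul_emod_right _ _),
      Int.mul_ediv_cancel_left _ hq.ne', Bool.not_not, mul_ediv_modulus_add_toNat_emod]

lemma step_add_modulus (t : Bool) (m : ℤ) (l : List Letter) :
    step c d t (m + modulus c d t, l) =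
      ((step c d t (m, l)).1 + modulus c d !t, (step c d t (m, l)).2) := by
  have hp := (modulus_pos (c := c) (d := d) t).ne'
  have hmod : (m + modulus c d t) % (modulus c d t : ℤ) = m % modulus c d t :=
    Int.add_emod_right _ _
  have hdiv : (m + modulus c d t) / (modulus c d t : ℤ) = m / modulus c d t + 1 := by
    rw [Int.add_ediv_of_dvd_right (dvd_refl _), Int.ediv_self hp]
  cases l with
  | nil => simp only [step, hmod, hdiv, mul_add, mul_one]
  | cons e l =>
      obtain ⟨t', s⟩ := e
      simp only [step, hmod, hdiv]
      split_ifs <;> ring_nf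

variable (c d) in
def stepPerm (t : Bool) : Equiv.Perm (NormalForm c d) where
  toFun x := ⟨step c d t x.1, reduced_step t x.2⟩
  invFun x := ⟨step c d (!t) x.1, reduced_step (!t) x.2⟩
  left_inv x := Subtype.ext (step_not_step t x.2)
  right_inv x := Subtype.ext (by simpa using step_not_step (!t) x.2)

lemma stepPerm_mul_shiftPerm_pow :
    stepPerm c d true * shiftPerm c d ^ c = shiftPerm c d ^ d * stepPerm c d true := by
  ext1 x
  apply Subtype.ext
  change step c d true ((shiftPerm c d ^ c) x).1 = ((shiftPerm c d ^ d) (stepPerm c d true x)).1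
  rw [shiftPerm_pow_apply, shiftPerm_pow_apply]
  exact step_add_modulus true x.1.1 x.1.2

variable (c d) in
def action : Grp c d →* Equiv.Perm (NormalForm c d) :=
  PresentedGroup.toGroup (f := fun t => cond t (stepPerm c d true) (shiftPerm c d)) <| by
    rintro r rfl
    simp only [map_mul, map_inv, map_pow, FreeGroup.lift_apply_of, cond_true, cond_false,
      mul_inv_eq_one]
    exact stepPerm_mul_shiftPerm_pow

lemma action_a : action c d (a c d) = stepPerm c d true := PresentedGroup.toGroup.of _

lemma action_b : action c d (b c d) = shiftPerm c d := PresentedGroup.toGroup.of _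

variable (c d) in
def normalForm (g : Grp c d) : NormalForm c d := action c d g ⟨(0, []), by simp [Reduced]⟩

variable (c d) in
def height (g : Grp c d) : ℤ := (normalForm c d g).1.1

lemma normalForm_mul (g h : Grp c d) :
    normalForm c d (g * h) = action c d g (normalForm c d h) := by
  rw [normalForm, map_mul, Equiv.Perm.mul_apply, normalForm]

lemma height_b_pow_mul (n : ℕ) (g : Grp c d) :
    height c d (b c d ^ n * g) = height c d g + n := by
  rw [height, normalForm_mul, map_pow, action_b, shiftPerm_pow_apply, height]

lemma height_b_mul (g : Grp c d) : height c d (b c d * g) = height c d g + 1 := by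
  simpa using height_b_pow_mul 1 g

lemma height_nonneg_and_fst_eq_true_of_mem_P {p : Grp c d} (hp : p ∈ P c d) :
    0 ≤ height c d p ∧ ∀ e ∈ (normalForm c d p).1.2, e.1 = true := by
  induction hp using Submonoid.closure_induction_left with
  | one => exact ⟨le_rfl, by simp [normalForm]⟩
  | mul_left x hx y _ ih =>
      rcases hx with rfl | rfl
      · rw [height, normalForm_mul, action_a]
        change 0 ≤ (step c d true _).1 ∧ ∀ e ∈ (step c d true _).2, e.1 = true
        rw [step_true_of_forall_fst ih.2]
        refine ⟨mul_nonneg (by positivity) (Int.ediv_nonneg ih.1 (by positivity)), ?_⟩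
        simpa using ih.2
      · rw [height_b_mul, normalForm_mul, action_b]
        exact ⟨by linarith [ih.1], ih.2⟩

lemma height_a_mul {p : Grp c d} (hp : p ∈ P c d) :
    height c d (a c d * p) = d * (height c d p / c) := by
  rw [height, normalForm_mul, action_a]
  exact congrArg Prod.fst (step_true_of_forall_fst (height_nonneg_and_fst_eq_true_of_mem_P hp).2)

lemma exists_eq_b_pow_mul {p : Grp c d} (hp : p ∈ P c d) {n : ℕ} (hn : n ≤ height c d p) :
    ∃ q ∈ P c d, p = b c d ^ n * q := by
  induction hp using Submonoid.closure_induction_left generalizing n with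
  | one =>
      obtain rfl : n = 0 := by simpa [height, normalForm] using hn
      exact ⟨1, one_mem _, by simp⟩
  | mul_left x hx y hy ih =>
      rcases hx with rfl | rfl
      · rw [height_a_mul hy] at hn
        obtain ⟨k, hk⟩ :=
          Int.eq_ofNat_of_zero_le <| Int.ediv_nonneg
            (height_nonneg_and_fst_eq_true_of_mem_P hy).1 (Int.natCast_nonneg c)
        obtain ⟨q, hq, rfl⟩ := ih (n := c * k) (by
          push_cast
          exact hk ▸ Int.mul_ediv_self_le (Int.natCast_ne_zero.mpr (NeZero.ne c)))
        have hnk : n ≤ d * k := by rw [hk] at hn; exact_mod_cast hn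
        refine ⟨b c d ^ (d * k - n) * (a c d * q),
          mul_mem (pow_mem (b_mem_P c d) _) (mul_mem (a_mem_P c d) hq), ?_⟩
        calc a c d * (b c d ^ (c * k) * q) = (b c d ^ d) ^ k * a c d * q := by
              rw [← mul_assoc, pow_mul, ((semiconjBy_a_b_pow c d).pow_right k).eq]
          _ = b c d ^ n * (b c d ^ (d * k - n) * (a c d * q)) := by
              rw [← pow_mul, ← Nat.add_sub_cancel' hnk, pow_add, Nat.add_sub_cancel_left]
              group
      · rw [height_b_mul] at hn
        cases n with
        | zero => exact ⟨b c d * y, mul_mem (b_mem_P c d) hy, by simp⟩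
        | succ n =>
            obtain ⟨q, hq, rfl⟩ := ih (n := n) (by push_cast at hn; linarith)
            exact ⟨q, hq, by rw [pow_succ', mul_assoc]⟩

lemma exists_eq_bP_pow_mul_of_bP_mul_eq {y z : P c d} (h : bP c d * z = aP c d * y) :
    ∃ q, y = bP c d ^ c * q := by
  have hheight := height_a_mul (c := c) (d := d) y.2
  rw [← show b c d * z = a c d * y from congrArg Subtype.val h, height_b_mul] at hheight
  have hz := (height_nonneg_and_fst_eq_true_of_mem_P z.2).1
  have hpos : 0 < height c d y / c :=
    pos_of_mul_pos_right (by linarith) (Int.natCast_nonneg d)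
  have hcy : (c : ℕ) ≤ height c d y := by
    simpa using (Int.le_ediv_iff_mul_le (by exact_mod_cast Nat.pos_of_neZero c)).mp hpos
  obtain ⟨q, hq, hyq⟩ := exists_eq_b_pow_mul y.2 hcy
  exact ⟨⟨q, hq⟩, Subtype.ext hyq⟩

lemma aP_mul_ne_bP_pow_mul_aP_mul {j : ℕ} (hj : 0 < j) (hjd : j < d) (y z : P c d) :
    aP c d * z ≠ bP c d ^ j * aP c d * y := by
  intro h
  have h' : a c d * z = b c d ^ j * (a c d * y) := by
    have h' := congrArg Subtype.val h
    simp only [Submonoid.coe_mul, SubmonoidClass.coe_pow, mul_assoc] at h'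
    exact h'
  have hheight := congrArg (height c d) h'
  rw [height_b_pow_mul, height_a_mul z.2, height_a_mul y.2] at hheight
  have hdvd : (d : ℤ) ∣ j := ⟨height c d z / c - height c d y / c, by linarith⟩
  exact absurd (Nat.le_of_dvd hj (Int.natCast_dvd_natCast.mp hdvd)) (by omega)

-- The instances on `l2P c d` in the statement differ syntactically from those on `ℓ²(M, 𝕜)` in
-- the lemmas above, and unifying them is costly.
set_option maxHeartbeats 400000 in
open ContinuousLinearMap in
/-- The operators T_a and T_b on ℓ²(P) (where T is the family of operators determined by
T_x e_y = e_{xy}) are isometries and satisfy: (i) T_a T_b^c = T_b^d T_a;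
(ii) (T_b)* T_a = T_b^(d-1) T_a ((T_b)*)^c; and (iii) (T_a)* T_b^j T_a = 0 for 1 ≤ j < d. -/
theorem statement7 (c d : ℕ) (hc : 0 < c) (hd : 0 < d)
    (T : P c d → (l2P c d →L[ℂ] l2P c d))
    (hT : ∀ x y : P c d, T x (lp.single 2 y 1) = lp.single 2 (x * y) 1) :
    adjoint (T (aP c d)) * T (aP c d) = 1 ∧
    adjoint (T (bP c d)) * T (bP c d) = 1 ∧
    T (aP c d) * T (bP c d) ^ c = T (bP c d) ^ d * T (aP c d) ∧
    adjoint (T (bP c d)) * T (aP c d)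
      = T (bP c d) ^ (d - 1) * T (aP c d) * adjoint (T (bP c d)) ^ c ∧
    ∀ j : ℕ, 1 ≤ j → j < d →
      adjoint (T (aP c d)) * T (bP c d) ^ j * T (aP c d) = 0 := by
  have : NeZero c := ⟨hc.ne'⟩
  have : NeZero d := ⟨hd.ne'⟩
  have hT : IsLeftRegularRep T := hT
  refine ⟨hT.adjoint_mul_self _, hT.adjoint_mul_self _, ?_, ?_, fun j hj hjd => ?_⟩
  · rw [← hT.map_pow, ← hT.map_mul, ← hT.map_pow, ← hT.map_mul, aP_mul_bP_pow c d]
  · rw [← hT.map_pow, ← hT.map_mul, ← adjoint_pow, ← hT.map_pow]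
    exact hT.adjoint_mul_eq_mul_adjoint (bP_mul_bP_pow_pred_mul_aP c d)
      fun _ _ h => exists_eq_bP_pow_mul_of_bP_mul_eq h
  · rw [mul_assoc, ← hT.map_pow, ← hT.map_mul]
    exact hT.adjoint_mul_eq_zero (aP_mul_ne_bP_pow_mul_aP_mul (c := c) hj hjd)

end BSpaper
end

section
/- Let H be a complex Hilbert space, W an isometry on H, and let U be the isometry on K = lp (fun _ : List (Fin d) => H) 2 determined by U(single σ h) = single (act 1 σ) (W^{carry 1 σ} h). Then for every ρ ∈ List (Fin d) and h ∈ H, U*(single (act 1 ρ) h) = single ρ ((W*)^{carry 1 ρ} h). -/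
open scoped Classical

namespace BSpaper

/-- `act m σ`: the result of pulling `b^m` through the stem with digit string `σ`
in `BS(c,d)` (acting on the digits). -/
def act (c : ℕ) {d : ℕ} : ℕ → List (Fin d) → List (Fin d)
  | _, [] => []
  | m, i :: σ => ⟨(m + (i : ℕ)) % d, Nat.mod_lt _ i.pos⟩ :: act c (c * ((m + (i : ℕ)) / d)) σ

/-- `carry m σ`: the power of `b` emerging on the right when `b^m` is pulled through the
stem with digit string `σ`. -/
def carry (c : ℕ) {d : ℕ} : ℕ → List (Fin d) → ℕ
  | m, [] => m
  | m, i :: σ => carry c (c * ((m + (i : ℕ)) / d)) σ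

theorem act_injective (c : ℕ) {d : ℕ} :
    ∀ (σ τ : List (Fin d)) (m : ℕ), act c m σ = act c m τ → σ = τ := by
  intro σ
  induction σ with
  | nil => intro τ m h; cases τ with
    | nil => rfl
    | cons j τ => simp [act] at h
  | cons i σ ih =>
    intro τ m h
    cases τ with
    | nil => simp [act] at h
    | cons j τ =>
      simp only [act, List.cons.injEq, Fin.mk.injEq] at h
      obtain ⟨h1, h2⟩ := h
      have hij : (i : ℕ) = (j : ℕ) := by
        have := (Nat.ModEq.add_left_cancel' m h1)
        rwa [Nat.ModEq, Nat.mod_eq_of_lt i.isLt, Nat.mod_eq_of_lt j.isLt] at this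
      have : i = j := Fin.ext hij
      subst this
      exact congrArg (i :: ·) (ih τ _ h2)

open scoped InnerProductSpace

open ContinuousLinearMap in
/-- Let W be an isometry on H and let U be the isometry on
K = lp (fun _ : List (Fin d) => H) 2 determined by
U (single σ h) = single (act 1 σ) (W^(carry 1 σ) h).  Then for every ρ and h,
U* (single (act 1 ρ) h) = single ρ ((W*)^(carry 1 ρ) h). -/
theorem statement16 (c d : ℕ) (hc : 0 < c) (hd : 0 < d)
    {H : Type*} [NormedAddCommGroup H] [InnerProductSpace ℂ H] [CompleteSpace H]
    (W : H →L[ℂ] H) (hW : adjoint W * W = 1)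
    (U : lp (fun _ : List (Fin d) => H) 2 →L[ℂ] lp (fun _ : List (Fin d) => H) 2)
    (hUiso : adjoint U * U = 1)
    (hU : ∀ (σ : List (Fin d)) (h : H),
      U (lp.single 2 σ h) = lp.single 2 (act c 1 σ) ((W ^ carry c 1 σ) h)) :
    ∀ (ρ : List (Fin d)) (h : H),
      adjoint U (lp.single 2 (act c 1 ρ) h)
        = lp.single 2 ρ ((adjoint W ^ carry c 1 ρ) h) := by
  intro ρ h
  apply lp.ext
  funext σ
  apply ext_inner_right ℂ
  intro k
  have lhs : ⟪(adjoint U (lp.single 2 (act c 1 ρ) h)) σ, k⟫_ℂ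
      = ⟪lp.single 2 (act c 1 ρ) h, U (lp.single 2 σ k)⟫_ℂ := by
    rw [← lp.inner_single_right, adjoint_inner_left]
  rw [lhs, hU, lp.inner_single_left]
  by_cases hσρ : σ = ρ
  · subst hσρ
    rw [lp.single_apply_self, lp.single_apply_self]
    rw [← adjoint_inner_left]
    congr 1
    rw [← star_eq_adjoint, star_pow, star_eq_adjoint]
  · have hne : act c 1 ρ ≠ act c 1 σ := fun he =>
      hσρ (act_injective c σ ρ 1 he.symm)
    rw [lp.single_apply_ne _ _ _ hne, lp.single_apply_ne _ _ _ hσρ]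
    simp

end BSpaper
end
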